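/- arXiv:1509.04372 — 5 statements merged into one kernel-verified Lean document; each statement's English description precedes it below -/
import Mathlib

section
/- For all positive integers n and q, every word of length at least ^{n-1}(2q+1) over a q-letter alphabet encounters the n-th Zimin word Z_n; consequently f(n,q) ≤ ^{n-1}(2q+1). -/
open Filter

/-- `U` is an instance of `V`: image of `V` under a nonerasing substitution. -/
def IsInstance {Γ β : Type*} (V : List Γ) (U : List β) : Prop :=
  ∃ φ : Γ → List β, (∀ x ∈ V, φ x ≠ []) ∧ U = (V.map φ).flatten

/-- `W` encounters `V`: some factor of `W` is an instance of `V`. -/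
def Encounters {Γ β : Type*} (V : List Γ) (W : List β) : Prop :=
  ∃ U : List β, U <:+: W ∧ IsInstance V U

/-- Zimin words over alphabet ℕ. -/
def Zimin : ℕ → List ℕ
  | 0 => []
  | n + 1 => Zimin n ++ [n] ++ Zimin n

/-- Least M such that every q-ary word of length M encounters Z_n. -/
noncomputable def fZ (n q : ℕ) : ℕ :=
  sInf {M | ∀ W : List (Fin q), W.length = M → Encounters (Zimin n) W}

/-- Exponential tower with b copies of a. -/
def tower (a : ℕ) : ℕ → ℕ
  | 0 => 1
  | b + 1 => a ^ tower a b

/-- Number of length-M q-ary words that are instances of V. -/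
noncomputable def instCount (V : List ℕ) (q M : ℕ) : ℕ :=
  Nat.card {W : Fin M → Fin q // IsInstance V (List.ofFn W)}

/-- Factor density d(V,W). -/
noncomputable def factorDensity {α : Type*} [DecidableEq α] (V W : List α) : ℝ :=
  (((((Finset.range (W.length + 1)) ×ˢ (Finset.range (W.length + 1))).filter
      (fun p => p.1 < p.2 ∧ (W.drop p.1).take (p.2 - p.1) = V)).card : ℝ)) /
    ((W.length : ℝ) + 1 - (V.length : ℝ))

/-- Number of substrings of W (given by position pairs) that are V-instances. -/
noncomputable def instSubCount {Γ β : Type*} (V : List Γ) (W : List β) : ℕ :=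
  Nat.card {p : ℕ × ℕ //
    p.1 < p.2 ∧ p.2 ≤ W.length ∧ IsInstance V ((W.drop p.1).take (p.2 - p.1))}

/-- Instance density δ(V,W). -/
noncomputable def instDensity {Γ β : Type*} (V : List Γ) (W : List β) : ℝ :=
  (instSubCount V W : ℝ) / ((W.length + 1).choose 2 : ℝ)

/-- q-liminf density of V. -/
noncomputable def liminfDensity {Γ : Type*} (V : List Γ) (q : ℕ) : ℝ :=
  Filter.liminf (fun W : List (Fin q) => instDensity V W) (Filter.comap List.length Filter.atTop)

/-- Expected instance density of V in a uniformly random q-ary word of length n. -/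
noncomputable def expDensity {Γ : Type*} (V : List Γ) (q n : ℕ) : ℝ :=
  (∑ W : Fin n → Fin q, instDensity V (List.ofFn W)) / (q : ℝ) ^ n

/-- Variance of the instance density of V in a uniformly random q-ary word of length n. -/
noncomputable def varDensity {Γ : Type*} (V : List Γ) (q n : ℕ) : ℝ :=
  (∑ W : Fin n → Fin q, (instDensity V (List.ofFn W) - expDensity V q n) ^ 2) / (q : ℝ) ^ n

/-- Probability that a uniformly random q-ary word of length n is a V-instance. -/
noncomputable def instProb {Γ : Type*} (V : List Γ) (q n : ℕ) : ℝ :=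
  (Nat.card {W : Fin n → Fin q // IsInstance V (List.ofFn W)} : ℝ) / (q : ℝ) ^ n

/-- V is doubled: every letter occurring in V occurs at least twice. -/
def Doubled {Γ : Type*} [DecidableEq Γ] (V : List Γ) : Prop :=
  ∀ x ∈ V, 2 ≤ V.count x

/-- Number of letter recurrences ‖V‖ = |V| - |L(V)|. -/
def recurCount {Γ : Type*} [DecidableEq Γ] (V : List Γ) : ℕ :=
  V.length - V.dedup.length

/- Induction on `n`. Put `M = ^(n-1)(2q+1)`; a word of length `(2q+1)^M ≥ M(2q^M + 1)`
contains `q^M + 1` disjoint blocks of length `M` with gaps of length `M` between them.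
Two of them are equal by pigeonhole, giving a factor `B G B` with `|B| = M` and `G` nonempty. By induction `B`
contains an instance `U` of `Z_n`, and then `B G B` contains `U (C G A) U`, an instance of
`Z_{n+1}`, where `B = A U C`. -/

theorem lt_of_mem_zimin {n x : ℕ} (hx : x ∈ Zimin n) : x < n := by
  induction n with
  | zero => simp [Zimin] at hx
  | succ m ih =>
    simp only [Zimin, List.mem_append, List.mem_singleton] at hx
    rcases hx with (hx | rfl) | hx <;> grind

theorem IsInstance.zimin_succ {β : Type*} {n : ℕ} {U X : List β}
    (hU : IsInstance (Zimin n) U) (hX : X ≠ []) :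
    IsInstance (Zimin (n + 1)) (U ++ X ++ U) := by
  obtain ⟨φ, hφ, rfl⟩ := hU
  have hmap : (Zimin n).map (Function.update φ n X) = (Zimin n).map φ :=
    List.map_congr_left fun x hx => Function.update_of_ne (lt_of_mem_zimin hx).ne _ _
  refine ⟨Function.update φ n X, fun x hx => ?_, ?_⟩
  · simp only [Zimin, List.mem_append, List.mem_singleton] at hx
    rcases hx with (hx | rfl) | hx
    · rw [Function.update_of_ne (lt_of_mem_zimin hx).ne]; exact hφ x hx
    · simpa using hX
    · rw [Function.update_of_ne (lt_of_mem_zimin hx).ne]; exact hφ x hx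
  · simp [Zimin, hmap]

theorem encounters_nil {Γ β : Type*} (W : List β) : Encounters ([] : List Γ) W :=
  ⟨[], List.nil_infix, fun _ => [], by simp, rfl⟩

theorem encounters_zimin_one {β : Type*} {W : List β} (hW : W ≠ []) :
    Encounters (Zimin 1) W :=
  ⟨W, List.infix_refl W, fun _ => W, fun _ _ => hW, by simp [Zimin]⟩

theorem Encounters.mono {Γ β : Type*} {V : List Γ} {W W' : List β}
    (h : Encounters V W) (hW : W <:+: W') : Encounters V W' :=
  let ⟨U, hU, hinst⟩ := h
  ⟨U, hU.trans hW, hinst⟩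

theorem Encounters.zimin_succ {β : Type*} {n : ℕ} {B G : List β}
    (hB : Encounters (Zimin n) B) (hG : G ≠ []) :
    Encounters (Zimin (n + 1)) (B ++ G ++ B) := by
  obtain ⟨U, ⟨A, C, rfl⟩, hU⟩ := hB
  refine ⟨U ++ (C ++ G ++ A) ++ U, ⟨A, C, by simp⟩, hU.zimin_succ ?_⟩
  simp [hG]

theorem List.take_drop_append_take_drop {α : Type*} (l : List α) (p x y : ℕ) :
    (l.drop p).take x ++ (l.drop (p + x)).take y = (l.drop p).take (x + y) := by
  rw [List.take_add, List.drop_drop]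

theorem List.take_drop_infix {α : Type*} (l : List α) (p x : ℕ) : (l.drop p).take x <:+: l :=
  (List.take_prefix _ _).isInfix.trans (List.drop_suffix _ _).isInfix

theorem exists_repeated_block_infix {α : Type*} [Fintype α] {M : ℕ} (hM : 0 < M)
    {W : List α} (hW : M * (2 * Fintype.card α ^ M + 1) ≤ W.length) :
    ∃ B G : List α, B.length = M ∧ G ≠ [] ∧ B ++ G ++ B <:+: W := by
  classical
  set k := Fintype.card α ^ M
  let block (i : ℕ) := (W.drop (2 * M * i)).take M
  have hlen {i : ℕ} (hi : i ≤ k) : (block i).length = M := by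
    have : 2 * M * i + M ≤ W.length := by nlinarith
    simp only [block, List.length_take, List.length_drop]
    omega
  obtain ⟨i, j, hij, heq⟩ := Fintype.exists_ne_map_eq_of_card_lt (β := List.Vector α M)
    (fun i : Fin (k + 1) => ⟨block i, hlen (Nat.lt_succ_iff.mp i.2)⟩)
    (by simp [k])
  obtain ⟨a, b, hab, hb, hblock⟩ : ∃ a b, a < b ∧ b ≤ k ∧ block a = block b := by
    rcases Fin.lt_or_lt_of_ne hij with h | h
    · exact ⟨i, j, h, Nat.lt_succ_iff.mp j.2, congrArg Subtype.val heq⟩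
    · exact ⟨j, i, h, Nat.lt_succ_iff.mp i.2, (congrArg Subtype.val heq).symm⟩
  obtain ⟨d, rfl⟩ := Nat.exists_eq_add_of_lt hab
  set G := (W.drop (2 * M * a + M)).take (2 * M * d + M)
  have hG : G ≠ [] := by
    have : 2 * M * (a + d + 1) + M ≤ W.length := by nlinarith
    rw [show 2 * M * (a + d + 1) = 2 * M * a + 2 * M * d + 2 * M by ring] at this
    simp only [G, ← List.length_pos_iff, List.length_take, List.length_drop]
    omega
  refine ⟨block a, G, hlen (by omega), hG, ?_⟩
  nth_rw 2 [hblock]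
  simp only [block, G]
  rw [show 2 * M * (a + d + 1) = 2 * M * a + (M + (2 * M * d + M)) by ring,
    List.take_drop_append_take_drop, List.take_drop_append_take_drop]
  exact List.take_drop_infix _ _ _

theorem mul_two_mul_pow_add_one_le {q : ℕ} (hq : 0 < q) {M : ℕ} (hM : 0 < M) :
    M * (2 * q ^ M + 1) ≤ (2 * q + 1) ^ M := by
  induction M, hM using Nat.le_induction with
  | base => simp
  | succ M hM ih =>
    have h₁ : q ^ M * q ≤ M * (q ^ M * q) := Nat.le_mul_of_pos_left _ hM
    have h₂ : 1 ≤ M * q := Nat.one_le_iff_ne_zero.mpr (by positivity)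
    calc (M + 1) * (2 * q ^ (M + 1) + 1)
        ≤ (2 * q + 1) * (M * (2 * q ^ M + 1)) := by
          rw [pow_succ]; generalize q ^ M = a at h₁; nlinarith
      _ ≤ (2 * q + 1) * (2 * q + 1) ^ M := Nat.mul_le_mul_left _ ih
      _ = (2 * q + 1) ^ (M + 1) := by ring

theorem tower_pos {a : ℕ} (ha : 0 < a) (b : ℕ) : 0 < tower a b := by
  cases b with
  | zero => exact Nat.one_pos
  | succ b => exact Nat.pow_pos ha

theorem encounters_zimin_succ_of_tower_le {α : Type*} [Fintype α] (n : ℕ) {W : List α}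
    (hW : tower (2 * Fintype.card α + 1) n ≤ W.length) : Encounters (Zimin (n + 1)) W := by
  induction n generalizing W with
  | zero => exact encounters_zimin_one (List.ne_nil_of_length_pos hW)
  | succ n ih =>
    set M := tower (2 * Fintype.card α + 1) n
    have hM : 0 < M := tower_pos (Nat.succ_pos _) n
    have hW_ne : W ≠ [] := List.ne_nil_of_length_pos ((tower_pos (Nat.succ_pos _) _).trans_le hW)
    have hα : 0 < Fintype.card α := Fintype.card_pos_iff.mpr ⟨W.head hW_ne⟩
    obtain ⟨B, G, hB, hG, hBGB⟩ := exists_repeated_block_infix hM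
      ((mul_two_mul_pow_add_one_le hα hM).trans hW)
    exact ((ih hB.ge).zimin_succ hG).mono hBGB

theorem stmt0_general (n q : ℕ) :
    (∀ W : List (Fin q), tower (2 * q + 1) (n - 1) ≤ W.length → Encounters (Zimin n) W) ∧
    fZ n q ≤ tower (2 * q + 1) (n - 1) := by
  have hencounters (W : List (Fin q)) (hW : tower (2 * q + 1) (n - 1) ≤ W.length) :
      Encounters (Zimin n) W := by
    cases n with
    | zero => exact encounters_nil W
    | succ n => simpa using encounters_zimin_succ_of_tower_le n (α := Fin q) (by simpa using hW)
  exact ⟨hencounters, Nat.sInf_le fun W hW => hencounters W hW.ge⟩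

theorem stmt0 (n q : ℕ) (hn : 0 < n) (hq : 0 < q) :
    (∀ W : List (Fin q), tower (2 * q + 1) (n - 1) ≤ W.length → Encounters (Zimin n) W) ∧
    fZ n q ≤ tower (2 * q + 1) (n - 1) :=
  stmt0_general n q
end

section
/- For every finite alphabet Σ with |Σ| = q ≥ 2 and all positive integers n and M, the number of instances of the n-th Zimin word Z_n among words in Σ^M satisfies |Inst_M(Z_n,Σ)| ≤ (q/(q−1))^{n−1} · q^{M − 2^n + n + 1}. -/
open Filter

lemma flatten_len {Γ β : Type*} (φ : Γ → List β) :
    ∀ V : List Γ, (∀ x ∈ V, φ x ≠ []) → V.length ≤ ((V.map φ).flatten).length := by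
  intro V
  induction V with
  | nil => simp
  | cons x V ih =>
    intro h
    simp only [List.map_cons, List.flatten_cons, List.length_append, List.length_cons]
    have h1 : 1 ≤ (φ x).length := List.length_pos_iff.mpr (h x (by simp))
    have h2 := ih (fun y hy => h y (by simp [hy]))
    omega

lemma isInstance_length_le {Γ β : Type*} {V : List Γ} {U : List β}
    (h : IsInstance V U) : V.length ≤ U.length := by
  obtain ⟨φ, hφ, rfl⟩ := h
  exact flatten_len φ V hφ

lemma zimin_length (n : ℕ) : (Zimin n).length = 2 ^ n - 1 := by
  induction n with
  | zero => simp [Zimin]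
  | succ n ih =>
    have : 1 ≤ 2 ^ n := Nat.one_le_two_pow
    simp only [Zimin, List.length_append, List.length_cons, List.length_nil, ih, pow_succ]
    omega

lemma instCount_le_pow (V : List ℕ) (q M : ℕ) : instCount V q M ≤ q ^ M := by
  rw [instCount]
  calc Nat.card {W : Fin M → Fin q // IsInstance V (List.ofFn W)}
      ≤ Nat.card (Fin M → Fin q) :=
        Nat.card_le_card_of_injective Subtype.val Subtype.val_injective
    _ = q ^ M := by simp [Nat.card_eq_fintype_card]

lemma instCount_eq_zero {V : List ℕ} {q a : ℕ} (h : a < V.length) : instCount V q a = 0 := by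
  rw [instCount]
  have : IsEmpty {W : Fin a → Fin q // IsInstance V (List.ofFn W)} := by
    refine ⟨fun W => ?_⟩
    have := isInstance_length_le W.2
    simp only [List.length_ofFn] at this
    omega
  exact Nat.card_of_isEmpty

lemma zimin_succ_split {q n : ℕ} {U : List (Fin q)} (h : IsInstance (Zimin (n + 1)) U) :
    ∃ A B : List (Fin q), IsInstance (Zimin n) A ∧ B ≠ [] ∧ U = A ++ B ++ A := by
  obtain ⟨φ, hφ, rfl⟩ := h
  refine ⟨(List.map φ (Zimin n)).flatten, φ n,
    ⟨φ, fun x hx => hφ x (by simp [Zimin, hx]), rfl⟩,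
    hφ n (by simp [Zimin]), ?_⟩
  simp [Zimin, List.map_append, List.flatten_append]

lemma nat_card_sigma {ι : Type*} [Fintype ι] (f : ι → Type*) [∀ i, Finite (f i)] :
    Nat.card (Σ i, f i) = ∑ i, Nat.card (f i) := by
  letI : ∀ i, Fintype (f i) := fun i => Fintype.ofFinite _
  simp [Nat.card_eq_fintype_card, Fintype.card_sigma]

lemma key (q n M : ℕ) :
    instCount (Zimin (n + 1)) q M ≤
      ∑ a ∈ Finset.range (M + 1),
        (if 2 * a < M then instCount (Zimin n) q a * q ^ (M - 2 * a) else 0) := by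
  classical
  set T := (a : Fin (M + 1)) ×
      ({A : Fin (a : ℕ) → Fin q // IsInstance (Zimin n) (List.ofFn A) ∧ 2 * (a : ℕ) < M} ×
        (Fin (M - 2 * (a : ℕ)) → Fin q)) with hT
  have hsplit : ∀ W : {W : Fin M → Fin q // IsInstance (Zimin (n + 1)) (List.ofFn W)},
      ∃ t : T, List.ofFn t.2.1.1 ++ List.ofFn t.2.2 ++ List.ofFn t.2.1.1 = List.ofFn W.1 := by
    rintro ⟨W, hW⟩
    obtain ⟨A, B, hA, hB, hU⟩ := zimin_succ_split hW
    have hlen : M = A.length + B.length + A.length := by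
      have := congrArg List.length hU
      simp only [List.length_ofFn, List.length_append] at this
      omega
    have hBpos : B.length ≠ 0 := by simpa using hB
    have h2a : 2 * A.length < M := by omega
    have ha : A.length < M + 1 := by omega
    refine ⟨⟨⟨A.length, ha⟩,
      ⟨⟨fun i => A.get ⟨i.1, i.2⟩, ?_, h2a⟩,
        fun i => B.get ⟨i.1, by
          have h2 := i.2
          simp only [Fin.val_mk] at h2
          omega⟩⟩⟩, ?_⟩
    · have e1 : List.ofFn (fun i : Fin ((⟨A.length, ha⟩ : Fin (M+1)) : ℕ) => A.get ⟨i.1, i.2⟩) = A := by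
        apply List.ext_getElem
        · simp
        · intro i h1 h2
          simp
      rw [e1]
      exact hA
    · have e1 : List.ofFn (fun i : Fin ((⟨A.length, ha⟩ : Fin (M+1)) : ℕ) => A.get ⟨i.1, i.2⟩) = A := by
        apply List.ext_getElem
        · simp
        · intro i h1 h2
          simp
      have e2 : ∀ f : Fin (M - 2 * ((⟨A.length, ha⟩ : Fin (M+1)) : ℕ)) → Fin q,
          (∀ i, ∃ hi : i.1 < B.length, f i = B.get ⟨i.1, hi⟩) → List.ofFn f = B := by
        intro f hf
        apply List.ext_getElem
        · simp only [List.length_ofFn, Fin.val_mk]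
          omega
        · intro i h1 h2
          simp only [List.getElem_ofFn]
          obtain ⟨hi, hfi⟩ := hf ⟨i, by simpa using h1⟩
          simp [hfi]
      rw [hU]
      exact congrArg₂ (· ++ ·) (congrArg₂ (· ++ ·) e1 (e2 _ (fun i => ⟨by
        have h2 := i.2
        simp only [Fin.val_mk] at h2
        omega, rfl⟩))) e1
  have hFinj : Function.Injective (fun W => (hsplit W).choose) := by
    intro W1 W2 h
    have h1 := (hsplit W1).choose_spec
    have h2 := (hsplit W2).choose_spec
    apply Subtype.ext
    apply List.ofFn_injective
    rw [← h1, ← h2]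
    exact congrArg (fun t : T => List.ofFn t.2.1.1 ++ List.ofFn t.2.2 ++ List.ofFn t.2.1.1) h
  have hcard : Nat.card T = ∑ a ∈ Finset.range (M + 1),
      (if 2 * a < M then instCount (Zimin n) q a * q ^ (M - 2 * a) else 0) := by
    rw [hT, nat_card_sigma]
    rw [← Fin.sum_univ_eq_sum_range (fun a =>
      (if 2 * a < M then instCount (Zimin n) q a * q ^ (M - 2 * a) else 0)) (M + 1)]
    refine Finset.sum_congr rfl fun a _ => ?_
    rw [Nat.card_prod]
    by_cases h : 2 * (a : ℕ) < M
    · simp only [h, if_true]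
      congr 1
      · rw [instCount]
        exact Nat.card_congr (Equiv.subtypeEquivRight (fun A => by simp [h]))
      · simp [Nat.card_eq_fintype_card]
    · have he : IsEmpty {A : Fin (a : ℕ) → Fin q //
          IsInstance (Zimin n) (List.ofFn A) ∧ 2 * (a : ℕ) < M} := ⟨fun A => h A.2.2⟩
      rw [if_neg h, Nat.card_of_isEmpty, zero_mul]
  calc instCount (Zimin (n + 1)) q M ≤ Nat.card T :=
        Nat.card_le_card_of_injective _ hFinj
    _ = _ := hcard

lemma geom_aux {r : ℝ} (h0 : 0 ≤ r) (h1 : r < 1) (n : ℕ) :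
    ∑ i ∈ Finset.range n, r ^ i ≤ (1 - r)⁻¹ := by
  have hpos : 0 < 1 - r := by linarith
  rw [geom_sum_eq h1.ne n]
  have e : (r ^ n - 1) / (r - 1) = (1 - r ^ n) / (1 - r) := by
    rw [div_eq_div_iff (by linarith) (by linarith)]
    ring
  rw [e, ← one_div, div_le_div_iff₀ hpos hpos]
  nlinarith [pow_nonneg h0 n]

lemma main_bound (q : ℕ) (hq : 2 ≤ q) : ∀ n, 1 ≤ n → ∀ M : ℕ,
    (instCount (Zimin n) q M : ℝ) ≤
      ((q : ℝ) / ((q : ℝ) - 1)) ^ (n - 1) * (q : ℝ) ^ ((M : ℤ) - 2 ^ n + n + 1) := by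
  have hq2 : (2 : ℝ) ≤ (q : ℝ) := by exact_mod_cast hq
  have hq0 : (0 : ℝ) < q := by linarith
  have hq0' : (q : ℝ) ≠ 0 := ne_of_gt hq0
  have hq1 : (0 : ℝ) < (q : ℝ) - 1 := by linarith
  intro n hn
  induction n, hn using Nat.le_induction with
  | base =>
    intro M
    have h1 : ((M : ℤ) - 2 ^ 1 + ((1 : ℕ) : ℤ) + 1) = (M : ℤ) := by push_cast; ring
    rw [h1, pow_zero, one_mul, zpow_natCast]
    calc (instCount (Zimin 1) q M : ℝ) ≤ ((q ^ M : ℕ) : ℝ) := by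
          exact_mod_cast instCount_le_pow _ _ _
      _ = (q : ℝ) ^ M := by push_cast; ring
  | succ n hn IH =>
    intro M
    rw [Nat.add_sub_cancel,
      show ((M : ℤ) - 2 ^ (n + 1) + ((n + 1 : ℕ) : ℤ) + 1) = ((M : ℤ) - 2 ^ (n + 1) + (n : ℤ) + 2)
        from by push_cast; ring]
    set C := (q : ℝ) / ((q : ℝ) - 1) with hCdef
    have hC : (0 : ℝ) < C := div_pos hq0 hq1
    set L : ℕ := 2 ^ n - 1 with hL
    have hL1 : 1 ≤ 2 ^ n := Nat.one_le_two_pow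
    set E := C ^ (n - 1) * (q : ℝ) ^ ((M : ℤ) - 2 ^ (n + 1) + n + 2) with hE
    have hEpos : 0 ≤ E := by positivity
    have hr0 : (0 : ℝ) ≤ (q : ℝ)⁻¹ := by positivity
    have hr1 : (q : ℝ)⁻¹ < 1 := by
      rw [inv_lt_one_iff₀]; right; linarith
    have step1 : (instCount (Zimin (n + 1)) q M : ℝ) ≤
        ∑ a ∈ Finset.range (M + 1),
          ((if 2 * a < M then instCount (Zimin n) q a * q ^ (M - 2 * a) else 0 : ℕ) : ℝ) := by
      exact_mod_cast key q n M
    have perterm : ∀ a ∈ Finset.range (M + 1),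
        ((if 2 * a < M then instCount (Zimin n) q a * q ^ (M - 2 * a) else 0 : ℕ) : ℝ) ≤
        E * (if L ≤ a then ((q : ℝ)⁻¹) ^ (a - L) else 0) := by
      intro a _
      have hifnn : (0 : ℝ) ≤ (if L ≤ a then ((q : ℝ)⁻¹) ^ (a - L) else 0) := by
        split_ifs
        · positivity
        · exact le_rfl
      by_cases h2 : 2 * a < M
      · by_cases hL' : L ≤ a
        · rw [if_pos h2, if_pos hL']
          have hcast : (((instCount (Zimin n) q a * q ^ (M - 2 * a) : ℕ)) : ℝ) =
              (instCount (Zimin n) q a : ℝ) * (q : ℝ) ^ ((M : ℤ) - 2 * a) := by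
            push_cast
            rw [← zpow_natCast (q : ℝ) (M - 2 * a),
              show ((M - 2 * a : ℕ) : ℤ) = (M : ℤ) - 2 * (a : ℤ) from by omega]
          rw [hcast]
          have hIH := IH a
          calc (instCount (Zimin n) q a : ℝ) * (q : ℝ) ^ ((M : ℤ) - 2 * a)
              ≤ (C ^ (n - 1) * (q : ℝ) ^ ((a : ℤ) - 2 ^ n + n + 1)) * (q : ℝ) ^ ((M : ℤ) - 2 * a) := by
                apply mul_le_mul_of_nonneg_right hIH (by positivity)
            _ = E * ((q : ℝ)⁻¹) ^ (a - L) := by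
                rw [hE, inv_pow, ← zpow_natCast (q : ℝ) (a - L), ← zpow_neg]
                rw [mul_assoc, mul_assoc, ← zpow_add₀ hq0', ← zpow_add₀ hq0']
                congr 1
                have hcast2 : ((a - L : ℕ) : ℤ) = (a : ℤ) - 2 ^ n + 1 := by
                  rw [hL] at hL' ⊢
                  push_cast [Nat.cast_sub hL', Nat.cast_sub hL1]
                  ring
                rw [hcast2]
                push_cast
                ring
        · rw [if_pos h2, if_neg hL']
          have hz : instCount (Zimin n) q a = 0 := by
            apply instCount_eq_zero
            rw [zimin_length]
            omega
          rw [hz, zero_mul, mul_zero]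
          simp
      · rw [if_neg h2]
        simpa using mul_nonneg hEpos hifnn
    have sumbound : ∑ a ∈ Finset.range (M + 1),
        E * (if L ≤ a then ((q : ℝ)⁻¹) ^ (a - L) else 0) ≤ E * (1 - (q : ℝ)⁻¹)⁻¹ := by
      rw [← Finset.mul_sum]
      apply mul_le_mul_of_nonneg_left _ hEpos
      have hfil : (Finset.range (M + 1)).filter (fun a => L ≤ a) = Finset.Ico L (M + 1) := by
        ext b
        simp only [Finset.mem_filter, Finset.mem_range, Finset.mem_Ico]
        omega
      rw [← Finset.sum_filter, hfil, Finset.sum_Ico_eq_sum_range]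
      simp only [add_tsub_cancel_left]
      exact geom_aux hr0 hr1 _
    have hCeq : (1 - (q : ℝ)⁻¹)⁻¹ = C := by
      rw [hCdef]
      rw [show (1 : ℝ) - (q : ℝ)⁻¹ = ((q : ℝ) - 1) / q by field_simp, inv_div]
    calc (instCount (Zimin (n + 1)) q M : ℝ)
        ≤ ∑ a ∈ Finset.range (M + 1),
          ((if 2 * a < M then instCount (Zimin n) q a * q ^ (M - 2 * a) else 0 : ℕ) : ℝ) := step1
      _ ≤ ∑ a ∈ Finset.range (M + 1),
          E * (if L ≤ a then ((q : ℝ)⁻¹) ^ (a - L) else 0) := Finset.sum_le_sum perterm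
      _ ≤ E * (1 - (q : ℝ)⁻¹)⁻¹ := sumbound
      _ = C ^ n * (q : ℝ) ^ ((M : ℤ) - 2 ^ (n + 1) + (n : ℤ) + 2) := by
          rw [hCeq, hE]
          have hCC : C ^ (n - 1) * C = C ^ n := by
            rw [← pow_succ]
            congr 1
            omega
          calc C ^ (n - 1) * (q : ℝ) ^ ((M : ℤ) - 2 ^ (n + 1) + (n : ℤ) + 2) * C
              = (C ^ (n - 1) * C) * (q : ℝ) ^ ((M : ℤ) - 2 ^ (n + 1) + (n : ℤ) + 2) := by ring
            _ = C ^ n * (q : ℝ) ^ ((M : ℤ) - 2 ^ (n + 1) + (n : ℤ) + 2) := by rw [hCC]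
    

theorem stmt2 (q n M : ℕ) (hq : 2 ≤ q) (hn : 1 ≤ n) (hM : 1 ≤ M) :
    (instCount (Zimin n) q M : ℝ) ≤
      ((q : ℝ) / ((q : ℝ) - 1)) ^ (n - 1) * (q : ℝ) ^ ((M : ℤ) - 2 ^ n + n + 1) :=
  main_bound q hq n hn M
end

section
/- Let a be a letter and let W be a word over an alphabet containing a with |W| ≥ ℓ, and let 0 < k < ℓ be integers. Then d(a^ℓ, W) ≤ d(a^k, W), and if equality holds then either d(a^ℓ, W) = 1 or d(a^k, W) = 0. -/
open Filter

/-!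
Count occurrences of a factor by their starting positions. Every start of `a^ℓ` is also a start of
`a^k`, and so are the `ℓ - k` positions just after the last start of `a^ℓ`. Hence if `a^ℓ` starts at
`A > 0` of its `u = |W| + 1 - ℓ` possible positions, then `a^k` starts at `B ≥ A + d` of its `u + d`
possible positions, `d = ℓ - k`; and `A / u ≤ (A + d) / (u + d) ≤ B / (u + d)`, the first inequality
being strict unless `A = u`.
-/

section Occurrences

variable {α : Type*} [DecidableEq α]

def occurrences (V W : List α) : Finset ℕ :=
  (Finset.range (W.length + 1)).filter fun i => (W.drop i).take V.length = V

lemma add_length_le_of_mem_occurrences {V W : List α} {i : ℕ} (hi : i ∈ occurrences V W) :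
    i + V.length ≤ W.length := by
  simp only [occurrences, Finset.mem_filter, Finset.mem_range] at hi
  have hlen := congrArg List.length hi.2
  simp only [List.length_take, List.length_drop] at hlen
  omega

lemma card_occurrences_add_length_le {V W : List α} (h : (occurrences V W).Nonempty) :
    (occurrences V W).card + V.length ≤ W.length + 1 := by
  have hsub : occurrences V W ⊆ Finset.range (W.length + 1 - V.length) := fun i hi => by
    have := add_length_le_of_mem_occurrences hi
    rw [Finset.mem_range]
    omega
  obtain ⟨i, hi⟩ := h
  have := add_length_le_of_mem_occurrences hi
  have := Finset.card_le_card hsub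
  rw [Finset.card_range] at this
  omega

lemma factorDensity_eq_card_occurrences {V : List α} (hV : V ≠ []) (W : List α) :
    factorDensity V W = (occurrences V W).card / ((W.length : ℝ) + 1 - V.length) := by
  have hpos : 0 < V.length := List.length_pos_iff.mpr hV
  rw [factorDensity]
  congr 2
  refine Finset.card_bij' (fun p _ => p.1) (fun i _ => (i, i + V.length)) ?_ ?_ ?_ (fun _ _ => rfl)
  · rintro ⟨i, j⟩ hp
    simp only [Finset.mem_filter, Finset.mem_product, Finset.mem_range] at hp
    obtain ⟨⟨hi, hj⟩, -, hV'⟩ := hp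
    have hlen := congrArg List.length hV'
    simp only [List.length_take, List.length_drop] at hlen
    simp only [occurrences, Finset.mem_filter, Finset.mem_range]
    exact ⟨hi, by rwa [← hlen, Nat.min_eq_left (by omega)]⟩
  · intro i hi
    have hle := add_length_le_of_mem_occurrences hi
    simp only [occurrences, Finset.mem_filter, Finset.mem_range] at hi
    simp only [Finset.mem_filter, Finset.mem_product, Finset.mem_range, Nat.add_sub_cancel_left]
    exact ⟨⟨hi.1, by omega⟩, by omega, hi.2⟩
  · rintro ⟨i, j⟩ hp
    simp only [Finset.mem_filter, Finset.mem_product, Finset.mem_range] at hp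
    obtain ⟨⟨-, hj⟩, hij, hV'⟩ := hp
    have hlen := congrArg List.length hV'
    simp only [List.length_take, List.length_drop] at hlen
    simp only [Prod.mk.injEq, true_and]
    omega

lemma factorDensity_nonneg {V : List α} (hV : V ≠ []) (W : List α) : 0 ≤ factorDensity V W := by
  rw [factorDensity_eq_card_occurrences hV]
  rcases (occurrences V W).eq_empty_or_nonempty with h | h
  · simp [h]
  · have : ((occurrences V W).card : ℝ) + V.length ≤ W.length + 1 := by
      exact_mod_cast card_occurrences_add_length_le h
    exact div_nonneg (Nat.cast_nonneg _) (by linarith)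

lemma add_mem_occurrences_replicate {a : α} {k ℓ i j : ℕ} {W : List α}
    (hi : i ∈ occurrences (List.replicate ℓ a) W) (hjk : j + k ≤ ℓ) :
    i + j ∈ occurrences (List.replicate k a) W := by
  have hle := add_length_le_of_mem_occurrences hi
  simp only [occurrences, Finset.mem_filter, Finset.mem_range, List.length_replicate] at hi hle ⊢
  refine ⟨by omega, ?_⟩
  have hdrop := congrArg (·.drop j) hi.2
  simp only [List.drop_take, List.drop_drop, List.drop_replicate] at hdrop
  rw [← Nat.min_eq_left (show k ≤ ℓ - j by omega), ← List.take_take, hdrop,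
    List.take_replicate]

lemma card_occurrences_replicate_add_le {a : α} {k ℓ : ℕ} (hkl : k ≤ ℓ) {W : List α}
    (h : (occurrences (List.replicate ℓ a) W).Nonempty) :
    (occurrences (List.replicate ℓ a) W).card + ℓ ≤
      (occurrences (List.replicate k a) W).card + k := by
  set S := occurrences (List.replicate ℓ a) W
  set i := S.max' h
  have hsub : S ∪ Finset.Ioc i (i + (ℓ - k)) ⊆ occurrences (List.replicate k a) W := by
    intro x hx
    rcases Finset.mem_union.mp hx with hx | hx
    · simpa using add_mem_occurrences_replicate (j := 0) hx (by omega)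
    · rw [Finset.mem_Ioc] at hx
      have hshift : x - i + k ≤ ℓ := by omega
      have := add_mem_occurrences_replicate (S.max'_mem h) hshift
      rwa [Nat.add_sub_of_le hx.1.le] at this
  have hdisj : Disjoint S (Finset.Ioc i (i + (ℓ - k))) :=
    Finset.disjoint_left.mpr fun x hx hx' => (Finset.mem_Ioc.mp hx').1.not_ge (S.le_max' x hx)
  have := Finset.card_le_card hsub
  rw [Finset.card_union_of_disjoint hdisj, Nat.card_Ioc] at this
  omega

end Occurrences

lemma div_le_div_add_of_add_le {A B u d : ℝ} (hu : 0 < u) (hd : 0 ≤ d) (hAu : A ≤ u)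
    (hAB : A + d ≤ B) : A / u ≤ B / (u + d) := by
  rw [div_le_div_iff₀ hu (by linarith)]
  nlinarith

lemma eq_of_div_eq_div_add_of_add_le {A B u d : ℝ} (hu : 0 < u) (hd : 0 < d) (hAu : A ≤ u)
    (hAB : A + d ≤ B) (h : A / u = B / (u + d)) : A = u := by
  rw [div_eq_div_iff hu.ne' (by linarith)] at h
  nlinarith

theorem stmt4_general {α : Type*} [DecidableEq α] (a : α) (k ℓ : ℕ) (hk : 0 < k) (hkl : k < ℓ)
    (W : List α) :
    factorDensity (List.replicate ℓ a) W ≤ factorDensity (List.replicate k a) W ∧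
    (factorDensity (List.replicate ℓ a) W = factorDensity (List.replicate k a) W →
      factorDensity (List.replicate ℓ a) W = 1 ∨ factorDensity (List.replicate k a) W = 0) := by
  have hk₀ : List.replicate k a ≠ [] := by simpa using hk.ne'
  have hℓ₀ : List.replicate ℓ a ≠ [] := by simpa using (hk.trans hkl).ne'
  rcases (occurrences (List.replicate ℓ a) W).eq_empty_or_nonempty with hA | hA
  · have hzero : factorDensity (List.replicate ℓ a) W = 0 := by
      simp [factorDensity_eq_card_occurrences hℓ₀, hA]
    rw [hzero]
    exact ⟨factorDensity_nonneg hk₀ W, fun h => Or.inr h.symm⟩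
  have hAu := card_occurrences_add_length_le hA
  have hAB := card_occurrences_replicate_add_le hkl.le hA
  rw [factorDensity_eq_card_occurrences hℓ₀, factorDensity_eq_card_occurrences hk₀]
  simp only [List.length_replicate] at hAu ⊢
  set A := (occurrences (List.replicate ℓ a) W).card
  set B := (occurrences (List.replicate k a) W).card
  have hAu' : (A : ℝ) + ℓ ≤ W.length + 1 := by exact_mod_cast hAu
  have hAB' : (A : ℝ) + ℓ ≤ B + k := by exact_mod_cast hAB
  have hA₀ : (0 : ℝ) < A := by exact_mod_cast hA.card_pos
  have hkl' : (k : ℝ) < ℓ := by exact_mod_cast hkl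
  have hu : (0 : ℝ) < W.length + 1 - ℓ := by linarith
  rw [show (W.length : ℝ) + 1 - k = (W.length + 1 - ℓ) + (ℓ - k) by ring]
  refine ⟨div_le_div_add_of_add_le hu (by linarith) (by linarith) (by linarith), fun h => ?_⟩
  rw [eq_of_div_eq_div_add_of_add_le hu (by linarith) (by linarith) (by linarith) h,
    div_self hu.ne']
  exact Or.inl rfl

theorem stmt4 {α : Type*} [DecidableEq α] (a : α) (k ℓ : ℕ) (hk : 0 < k) (hkl : k < ℓ)
    (W : List α) (hW : ℓ ≤ W.length) :
    factorDensity (List.replicate ℓ a) W ≤ factorDensity (List.replicate k a) W ∧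
    (factorDensity (List.replicate ℓ a) W = factorDensity (List.replicate k a) W →
      factorDensity (List.replicate ℓ a) W = 1 ∨ factorDensity (List.replicate k a) W = 0) :=
  stmt4_general a k ℓ hk hkl W
end

section
/- For integers 0 < k < ℓ and every rational number d with 0 ≤ d ≤ (ℓ−k)/ℓ, there exist arbitrarily long words W over a two-letter alphabet {a,b} such that d(a^k, W) = d and d(a^ℓ, W) = 0; that is, for every N there exists such a word W with |W| ≥ N. -/
/-!
The word `(a^(ℓ-1) b)^s b^t` never contains `a^ℓ`, and contains `a^k` exactly `s (ℓ - k)` times,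
`ℓ - k` times inside each block `a^(ℓ-1) b`. Writing `d = p / q` and taking `s = p M`, the free
tail length `t` is chosen so that the number `|W| + 1 - k` of windows of length `k` equals
`q (ℓ - k) M`; then the density is exactly `p / q`. The hypothesis `d ≤ (ℓ - k) / ℓ` is precisely
what makes this `t` nonnegative, and `M` makes the word as long as required.
-/

open Filter

section FactorCount

variable {α : Type*} [DecidableEq α]

def factorCount (V W : List α) : ℕ :=
  ((Finset.range (W.length + 1)).filter (fun i => V <+: W.drop i)).card

theorem factorCount_nil {V : List α} (hV : V ≠ []) : factorCount V [] = 0 := by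
  simp [factorCount, List.prefix_nil, hV]

theorem factorCount_cons (V W : List α) (x : α) :
    factorCount V (x :: W) = factorCount V W + if V <+: x :: W then 1 else 0 := by
  simp only [factorCount, Finset.card_filter, List.length_cons]
  rw [Finset.sum_range_succ']
  simp only [List.drop_succ_cons, List.drop_zero]

theorem factorDensity_eq_factorCount {V : List α} (hV : V ≠ []) (W : List α) :
    factorDensity V W = factorCount V W / ((W.length : ℝ) + 1 - V.length) := by
  unfold factorDensity factorCount
  congr 2
  apply Finset.card_bij' (fun p _ => p.1) (fun i _ => (i, i + V.length))
  · rintro ⟨i, j⟩ hp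
    simp only [Finset.mem_filter, Finset.mem_product, Finset.mem_range] at hp ⊢
    obtain ⟨⟨hi, -⟩, -, hw⟩ := hp
    exact ⟨hi, hw ▸ List.take_prefix _ _⟩
  · intro i hi
    simp only [Finset.mem_filter, Finset.mem_product, Finset.mem_range] at hi ⊢
    obtain ⟨hi, hw⟩ := hi
    have hlen := hw.length_le
    simp only [List.length_drop] at hlen
    have hpos := List.length_pos_iff.mpr hV
    refine ⟨⟨hi, by omega⟩, by omega, ?_⟩
    simpa using (List.prefix_iff_eq_take.mp hw).symm
  · rintro ⟨i, j⟩ hp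
    simp only [Finset.mem_filter, Finset.mem_product, Finset.mem_range] at hp
    obtain ⟨⟨-, hj⟩, hij, hw⟩ := hp
    have hlen := congrArg List.length hw
    simp only [List.length_take, List.length_drop] at hlen
    simp only [Prod.mk.injEq, true_and]
    omega
  · intro i _
    rfl

end FactorCount

section BlockWord

open List

variable {α : Type*} {a b : α}

theorem replicate_prefix_replicate_append_cons_iff (hab : a ≠ b) (m j : ℕ) (W : List α) :
    replicate m a <+: replicate j a ++ b :: W ↔ m ≤ j := by
  induction j generalizing m with
  | zero => cases m <;> simp [replicate_succ, cons_prefix_cons, hab]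
  | succ j ih => cases m <;> simp [replicate_succ, cons_prefix_cons, ih]

def blockWord (a b : α) (r s t : ℕ) : List α :=
  (replicate s (replicate r a ++ [b])).flatten ++ replicate t b

theorem blockWord_succ (a b : α) (r s t : ℕ) :
    blockWord a b r (s + 1) t = replicate r a ++ b :: blockWord a b r s t := by
  simp [blockWord, replicate_succ]

theorem length_blockWord (a b : α) (r s t : ℕ) :
    (blockWord a b r s t).length = s * (r + 1) + t := by
  induction s with
  | zero => simp [blockWord]
  | succ s ih => simp only [blockWord_succ, length_append, length_cons, length_replicate, ih]; ring

variable [DecidableEq α]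

theorem factorCount_replicate_append_cons (hab : a ≠ b) (m j : ℕ) (W : List α) :
    factorCount (replicate m a) (replicate j a ++ b :: W) =
      factorCount (replicate m a) W + (j + 1 - m) := by
  induction j with
  | zero =>
    have h := replicate_prefix_replicate_append_cons_iff hab m 0 W
    rw [replicate_zero, nil_append] at h ⊢
    simp only [factorCount_cons, h]
    split_ifs <;> omega
  | succ j ih =>
    rw [replicate_succ, cons_append, factorCount_cons, ih, ← cons_append, ← replicate_succ]
    simp only [replicate_prefix_replicate_append_cons_iff hab]
    split_ifs <;> omega

theorem factorCount_replicate_replicate (hab : a ≠ b) {m : ℕ} (hm : 0 < m) (t : ℕ) :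
    factorCount (replicate m a) (replicate t b) = 0 := by
  induction t with
  | zero => exact factorCount_nil (by simp; omega)
  | succ t ih =>
    have h := factorCount_replicate_append_cons hab m 0 (replicate t b)
    rw [replicate_zero, nil_append, ih] at h
    rw [replicate_succ, h]
    omega

theorem factorCount_replicate_blockWord (hab : a ≠ b) {m : ℕ} (hm : 0 < m) (r s t : ℕ) :
    factorCount (replicate m a) (blockWord a b r s t) = s * (r + 1 - m) := by
  induction s with
  | zero => simpa [blockWord] using factorCount_replicate_replicate hab hm t
  | succ s ih => rw [blockWord_succ, factorCount_replicate_append_cons hab, ih]; ring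

theorem factorDensity_replicate_blockWord (hab : a ≠ b) {m : ℕ} (hm : 0 < m) (r s t : ℕ) :
    factorDensity (replicate m a) (blockWord a b r s t) =
      (s * (r + 1 - m) : ℕ) / ((s * (r + 1) + t : ℕ) + 1 - m : ℝ) := by
  rw [factorDensity_eq_factorCount (by simp; omega), factorCount_replicate_blockWord hab hm,
    length_blockWord, length_replicate]

end BlockWord

theorem stmt5 (k ℓ : ℕ) (hk : 0 < k) (hkl : k < ℓ) (d : ℚ) (hd0 : 0 ≤ d)
    (hd1 : d ≤ ((ℓ : ℚ) - k) / ℓ) (N : ℕ) :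
    ∃ W : List (Fin 2), N ≤ W.length ∧
      factorDensity (List.replicate k (0 : Fin 2)) W = (d : ℝ) ∧
      factorDensity (List.replicate ℓ (0 : Fin 2)) W = 0 := by
  obtain ⟨e, rfl⟩ := Nat.exists_eq_add_of_lt hkl
  obtain ⟨p, q, hq, rfl⟩ : ∃ p q : ℕ, 0 < q ∧ d = p / q :=
    ⟨d.num.toNat, d.den, d.den_pos, by
      rw [← Int.cast_natCast, Int.toNat_of_nonneg (Rat.num_nonneg.mpr hd0), Rat.num_div_den]⟩
  have hpq : p * (k + e + 1) ≤ q * (e + 1) := by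
    push_cast at hd1
    rw [show (k : ℚ) + e + 1 - k = e + 1 by ring, div_le_div_iff₀ (by positivity) (by positivity)] at hd1
    rw [mul_comm q]
    exact_mod_cast hd1
  obtain ⟨c, hc⟩ := Nat.exists_eq_add_of_le hpq
  have hlen : p * (N + 1) * (k + e + 1) + (c * (N + 1) + (k - 1)) + 1 = q * (e + 1) * (N + 1) + k := by
    zify [Nat.one_le_iff_ne_zero.mpr hk.ne'] at hc ⊢
    linear_combination -(N + 1) * hc
  refine ⟨blockWord 0 1 (k + e) (p * (N + 1)) (c * (N + 1) + (k - 1)), ?_, ?_, ?_⟩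
  · have : N + 1 ≤ q * (e + 1) * (N + 1) := Nat.le_mul_of_pos_left _ (by positivity)
    rw [length_blockWord]
    omega
  · have hden : ((p * (N + 1) * (k + e + 1) + (c * (N + 1) + (k - 1)) : ℕ) : ℝ) + 1 - k =
        q * (e + 1) * (N + 1) := by
      rw [← Nat.cast_add_one, hlen]; push_cast; ring
    rw [factorDensity_replicate_blockWord (by decide) hk, hden, show k + e + 1 - k = e + 1 by omega]
    push_cast
    field_simp
  · rw [factorDensity_replicate_blockWord (by decide) (by omega)]
    simp
end

section
/- Fix an integer q ≥ 2 and let V be a nonempty word on any alphabet. Then V is doubled if and only if the expected instance densities δ_n(V,q) converge to 0 as n → ∞. -/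
open Filter

/-! By linearity of expectation, and since every factor of a uniformly random word is itself
uniformly random, `δ_n(V, q)` is the average over the `binom(n+1, 2)` factor positions of the
probability that a uniformly random word of the factor's length `ℓ` is an instance of `V`.

If `V` is doubled, an instance of length `ℓ` is determined by the lengths of the images of the
`k` distinct letters together with the concatenation of these images, which has length at most
`ℓ / 2`. Hence that probability is at most `(ℓ + 1)^k q^(-ℓ/2)`, a summable sequence, and the
average is `O(1/n)`.

If a letter `x` occurs only once, `V = P x S`, then every word of length `ℓ ≥ |V|` that begins
with `|P|` and ends with `|S|` copies of a fixed letter is an instance (`x` absorbs the middle),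
so the probability is at least `q^(1 - |V|)` for all these `ℓ`, which cover a quarter of the
factor positions once `n > 2|V|`. -/

open Finset Topology

section Words

variable {Γ β α : Type*}

theorem List.map_eq_map_of_flatten_map_eq {L : List Γ} {φ ψ : Γ → List β}
    (hlen : ∀ x ∈ L, (φ x).length = (ψ x).length)
    (h : (L.map φ).flatten = (L.map ψ).flatten) : L.map φ = L.map ψ := by
  induction L with
  | nil => rfl
  | cons a L ih =>
    simp only [List.map_cons, List.flatten_cons] at h ⊢
    obtain ⟨hhead, htail⟩ := List.append_inj h (hlen a List.mem_cons_self)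
    rw [hhead, ih (fun x hx => hlen x (List.mem_cons_of_mem a hx)) htail]

theorem List.length_le_length_flatten_map {L : List Γ} (φ : Γ → List β) {x : Γ} (hx : x ∈ L) :
    (φ x).length ≤ ((L.map φ).flatten).length := by
  rw [List.length_flatten, List.map_map]
  exact List.le_sum_of_mem (List.mem_map_of_mem (f := List.length ∘ φ) hx)

theorem card_filter_take_drop_ofFn [Fintype α] (P : List α → Prop) [DecidablePred P] (i ℓ c : ℕ) :
    #{W : Fin (i + ℓ + c) → α | P (((List.ofFn W).drop i).take ℓ)}
      = #{U : Fin ℓ → α | P (List.ofFn U)} * Fintype.card α ^ (i + c) := by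
  let e : (Fin i → α) × (Fin ℓ → α) × (Fin c → α) ≃ (Fin (i + ℓ + c) → α) :=
    (Equiv.prodAssoc _ _ _).symm.trans
      (((Fin.appendEquiv i ℓ).prodCongr (Equiv.refl _)).trans (Fin.appendEquiv (i + ℓ) c))
  have hfactor : ∀ t, ((List.ofFn (e t)).drop i).take ℓ = List.ofFn t.2.1 := by
    rintro ⟨a, b, c⟩
    change ((List.ofFn (Fin.append (Fin.append a b) c)).drop i).take ℓ = List.ofFn b
    simp
  let T : Finset ((Fin i → α) × (Fin ℓ → α) × (Fin c → α)) :=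
    univ ×ˢ (univ.filter (fun U : Fin ℓ → α => P (List.ofFn U)) ×ˢ univ)
  rw [Finset.card_equiv e.symm (t := T) (fun W => by simp [T, ← hfactor (e.symm W)])]
  simp [T, card_product, pow_add]
  ring

theorem summable_succ_pow_mul_geometric {r : ℝ} (hr₀ : 0 < r) (hr₁ : r < 1) (k : ℕ) :
    Summable fun ℓ : ℕ => ((ℓ : ℝ) + 1) ^ k * r ^ ℓ := by
  have hshift := ((summable_nat_add_iff 1).2 <| summable_pow_mul_geometric_of_norm_lt_one k
    (r := r) (by rwa [Real.norm_of_nonneg hr₀.le])).mul_left r⁻¹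
  refine hshift.congr fun ℓ => ?_
  push_cast
  field_simp
  ring

def factorPositions (n : ℕ) : Finset (ℕ × ℕ) :=
  {p ∈ range (n + 1) ×ˢ range (n + 1) | p.1 < p.2}

theorem card_factorPositions (n : ℕ) : #(factorPositions n) = (n + 1).choose 2 := by
  have hcol : ∀ j ∈ range (n + 1), #{i ∈ range (n + 1) | i < j} = j := by
    intro j hj
    rw [mem_range] at hj
    rw [show {i ∈ range (n + 1) | i < j} = range j by ext; simp; omega, card_range]
  rw [factorPositions, card_filter, sum_product_right]
  simp only [← card_filter]
  rw [sum_congr rfl hcol, sum_range_id, Nat.choose_two_right, Nat.add_sub_cancel, mul_comm]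

theorem choose_le_card_filter_factorPositions {m n : ℕ} (hmn : m ≤ n) :
    (n + 1 - m).choose 2 ≤ #{p ∈ factorPositions n | m ≤ p.2 - p.1} := by
  rw [show n + 1 - m = n - m + 1 by omega, ← card_factorPositions]
  refine card_le_card_of_injOn (fun p => (p.1, p.2 + m)) (fun p hp => ?_) fun p _ p' _ h => ?_
  · simp only [factorPositions, coe_filter, mem_filter, mem_product, mem_range,
      Set.mem_ofPred_eq] at hp ⊢
    omega
  · simp only [Prod.mk.injEq, add_left_inj] at h
    exact Prod.ext h.1 h.2

theorem choose_two_le_four_mul_choose_two_sub {m n : ℕ} (hmn : 2 * m + 1 ≤ n) :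
    ((n + 1).choose 2 : ℝ) ≤ 4 * (n + 1 - m).choose 2 := by
  rw [Nat.cast_choose_two, Nat.cast_choose_two, Nat.cast_sub (by omega)]
  have : (2 * m + 1 : ℝ) ≤ n := by exact_mod_cast hmn
  push_cast
  nlinarith

theorem sum_factorPositions_le_mul_tsum {g : ℕ → ℝ} (hg : ∀ ℓ, 0 ≤ g ℓ) (hs : Summable g)
    (n : ℕ) : ∑ p ∈ factorPositions n, g (p.2 - p.1) ≤ (n + 1) * ∑' ℓ, g ℓ := by
  have hrow : ∀ i, ∑ j ∈ range (n + 1) with i < j, g (j - i) ≤ ∑' ℓ, g ℓ := by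
    intro i
    rw [← Finset.sum_image (g := (· - i)) fun a ha b hb hab => by
      simp only [coe_filter, mem_range, Set.mem_ofPred_eq] at ha hb hab; omega]
    exact hs.sum_le_tsum _ fun ℓ _ => hg ℓ
  calc ∑ p ∈ factorPositions n, g (p.2 - p.1)
      = ∑ i ∈ range (n + 1), ∑ j ∈ range (n + 1) with i < j, g (j - i) := by
        simp only [factorPositions, sum_filter, sum_product]
    _ ≤ ∑ _i ∈ range (n + 1), ∑' ℓ, g ℓ := sum_le_sum fun i _ => hrow i
    _ = (n + 1) * ∑' ℓ, g ℓ := by simp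

open Classical in
theorem instSubCount_eq_card (V : List Γ) (W : List β) :
    instSubCount V W =
      #{p ∈ factorPositions W.length | IsInstance V ((W.drop p.1).take (p.2 - p.1))} := by
  rw [instSubCount, ← Nat.card_eq_finsetCard]
  congr
  ext p
  simp only [factorPositions, mem_filter, mem_product, mem_range]
  exact ⟨fun ⟨h1, h2, h3⟩ => ⟨⟨⟨by omega, by omega⟩, h1⟩, h3⟩,
    fun ⟨⟨⟨_, h2⟩, h1⟩, h3⟩ => ⟨h1, by omega, h3⟩⟩

open Classical in
theorem card_filter_isInstance_factor_div (V : List Γ) {q : ℕ} (hq : 0 < q) {n i j : ℕ}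
    (hij : i ≤ j) (hjn : j ≤ n) :
    (#{W : Fin n → Fin q | IsInstance V (((List.ofFn W).drop i).take (j - i))} : ℝ) / q ^ n
      = instProb V q (j - i) := by
  obtain ⟨c, rfl⟩ : ∃ c, n = i + (j - i) + c := ⟨n - j, by omega⟩
  rw [card_filter_take_drop_ofFn (IsInstance V), instProb, Nat.card_eq_fintype_card,
    Fintype.card_subtype, Fintype.card_fin]
  have : (q : ℝ) ≠ 0 := by positivity
  field_simp
  push_cast
  ring

theorem expDensity_eq_sum_instProb (V : List Γ) {q : ℕ} (hq : 0 < q) (n : ℕ) :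
    expDensity V q n
      = (∑ p ∈ factorPositions n, instProb V q (p.2 - p.1)) / (n + 1).choose 2 := by
  classical
  have hswap : ∑ W : Fin n → Fin q, (instSubCount V (List.ofFn W) : ℝ)
      = ∑ p ∈ factorPositions n,
          (#{W : Fin n → Fin q | IsInstance V (((List.ofFn W).drop p.1).take (p.2 - p.1))} : ℝ) := by
    simp only [instSubCount_eq_card, List.length_ofFn, card_filter, Nat.cast_sum]
    exact Finset.sum_comm
  have hfactor : ∀ p ∈ factorPositions n,
      (#{W : Fin n → Fin q | IsInstance V (((List.ofFn W).drop p.1).take (p.2 - p.1))} : ℝ)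
        / q ^ n = instProb V q (p.2 - p.1) := by
    intro p hp
    simp only [factorPositions, mem_filter, mem_product, mem_range] at hp
    exact card_filter_isInstance_factor_div V hq (by omega) (by omega)
  simp only [expDensity, instDensity, List.length_ofFn, ← Finset.sum_div, hswap]
  rw [div_right_comm, Finset.sum_div, Finset.sum_congr rfl hfactor]

theorem instProb_nonneg (V : List Γ) (q ℓ : ℕ) : 0 ≤ instProb V q ℓ := by
  unfold instProb
  positivity

section Doubled

variable [DecidableEq Γ]

theorem flatten_map_eq_of_flatten_map_dedup_eq {V : List Γ} {φ ψ : Γ → List β}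
    (hlen : ∀ x ∈ V, (φ x).length = (ψ x).length)
    (h : (V.dedup.map φ).flatten = (V.dedup.map ψ).flatten) :
    (V.map φ).flatten = (V.map ψ).flatten := by
  have hded := List.map_inj_left.1 <|
    List.map_eq_map_of_flatten_map_eq (fun x hx => hlen x (List.mem_dedup.1 hx)) h
  rw [List.map_inj_left.2 fun x hx => hded x (List.mem_dedup.2 hx)]

theorem Doubled.two_mul_length_flatten_dedup_le {V : List Γ} (hD : Doubled V)
    (φ : Γ → List β) : 2 * ((V.dedup.map φ).flatten).length ≤ ((V.map φ).flatten).length := by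
  have hdedup : ((V.dedup.map φ).flatten).length = ∑ x ∈ V.toFinset, (φ x).length := by
    rw [List.length_flatten, List.map_map, ← List.sum_toFinset _ V.nodup_dedup]
    congr 1
    ext x
    simp
  have hfull : ((V.map φ).flatten).length = ∑ x ∈ V.toFinset, V.count x * (φ x).length := by
    rw [List.length_flatten, List.map_map, Finset.sum_list_map_count]
    rfl
  rw [hdedup, hfull, Finset.mul_sum]
  exact Finset.sum_le_sum fun x hx => Nat.mul_le_mul_right _ (hD x (List.mem_toFinset.1 hx))

theorem Doubled.card_isInstance_le [Fintype α] [Nonempty α] {V : List Γ} (hD : Doubled V)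
    (ℓ : ℕ) :
    Nat.card {U : Fin ℓ → α // IsInstance V (List.ofFn U)}
      ≤ (ℓ + 1) ^ #V.toFinset * Fintype.card α ^ (ℓ / 2) := by
  inhabit α
  let code (U : {U : Fin ℓ → α // IsInstance V (List.ofFn U)}) :
      (V.toFinset → Fin (ℓ + 1)) × (Fin (ℓ / 2) → α) :=
    (fun x => ⟨min (U.2.choose x).length ℓ, by omega⟩,
      fun t => ((V.dedup.map U.2.choose).flatten).getD t default)
  have hcode : Function.Injective code := by
    rintro ⟨U, hU⟩ ⟨U', hU'⟩ h
    obtain ⟨-, hφ⟩ := hU.choose_spec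
    obtain ⟨-, hφ'⟩ := hU'.choose_spec
    set φ := hU.choose
    set φ' := hU'.choose
    have hlen : ∀ x ∈ V, (φ x).length = (φ' x).length := by
      intro x hx
      have hx' := congrArg Fin.val (congrFun (congrArg Prod.fst h) ⟨x, List.mem_toFinset.2 hx⟩)
      have hle := List.length_le_length_flatten_map φ hx
      have hle' := List.length_le_length_flatten_map φ' hx
      rw [← hφ, List.length_ofFn] at hle
      rw [← hφ', List.length_ofFn] at hle'
      simpa [code, φ, φ', hle, hle'] using hx'
    have hdedup : (V.dedup.map φ).flatten = (V.dedup.map φ').flatten := by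
      have hlt := hD.two_mul_length_flatten_dedup_le φ
      rw [← hφ, List.length_ofFn] at hlt
      refine List.ext_getElem ?_ fun t ht ht' => ?_
      · simp only [List.length_flatten, List.map_map]
        exact congrArg List.sum
          (List.map_congr_left fun x hx => hlen x (List.mem_dedup.1 hx))
      · have hcoord : (V.dedup.map φ).flatten.getD t default
            = (V.dedup.map φ').flatten.getD t default :=
          congrFun (congrArg Prod.snd h) ⟨t, by omega⟩
        rwa [List.getD_eq_getElem _ _ ht, List.getD_eq_getElem _ _ ht'] at hcoord
    exact Subtype.ext <| List.ofFn_injective <| by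
      rw [hφ, hφ', flatten_map_eq_of_flatten_map_dedup_eq hlen hdedup]
  calc Nat.card {U : Fin ℓ → α // IsInstance V (List.ofFn U)}
      ≤ Nat.card ((V.toFinset → Fin (ℓ + 1)) × (Fin (ℓ / 2) → α)) :=
        Nat.card_le_card_of_injective code hcode
    _ = (ℓ + 1) ^ #V.toFinset * Fintype.card α ^ (ℓ / 2) := by
        rw [Nat.card_eq_fintype_card, Fintype.card_prod, Fintype.card_fun, Fintype.card_fun,
          Fintype.card_coe, Fintype.card_fin, Fintype.card_fin]

theorem Doubled.instProb_le {V : List Γ} (hD : Doubled V) {q : ℕ} (hq : 0 < q)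
    (ℓ : ℕ) : instProb V q ℓ ≤ (ℓ + 1) ^ #V.toFinset * (√q)⁻¹ ^ ℓ := by
  have : NeZero q := ⟨hq.ne'⟩
  have hcard := hD.card_isInstance_le (α := Fin q) ℓ
  rw [Fintype.card_fin] at hcard
  have hhalf : (q : ℝ) ^ (ℓ / 2) ≤ √q ^ ℓ :=
    calc (q : ℝ) ^ (ℓ / 2) = √q ^ (2 * (ℓ / 2)) := by
          rw [pow_mul, Real.sq_sqrt (by positivity)]
      _ ≤ √q ^ ℓ := pow_le_pow_right₀ (Real.one_le_sqrt.2 (by exact_mod_cast hq))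
          (Nat.mul_div_le ℓ 2)
  have hfull : (q : ℝ) ^ ℓ = √q ^ ℓ * √q ^ ℓ := by
    rw [← mul_pow, Real.mul_self_sqrt (by positivity)]
  rw [instProb, div_le_iff₀ (by positivity), hfull, inv_pow]
  calc (Nat.card {W : Fin ℓ → Fin q // IsInstance V (List.ofFn W)} : ℝ)
      ≤ (ℓ + 1) ^ #V.toFinset * q ^ (ℓ / 2) := by exact_mod_cast hcard
    _ ≤ (ℓ + 1) ^ #V.toFinset * √q ^ ℓ := by gcongr
    _ = (ℓ + 1) ^ #V.toFinset * (√q ^ ℓ)⁻¹ * (√q ^ ℓ * √q ^ ℓ) := by field_simp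

theorem Doubled.tendsto_expDensity {V : List Γ} (hD : Doubled V) {q : ℕ}
    (hq : 2 ≤ q) : Tendsto (expDensity V q) atTop (𝓝 0) := by
  set g : ℕ → ℝ := fun ℓ => ((ℓ : ℝ) + 1) ^ #V.toFinset * (√q)⁻¹ ^ ℓ
  have hq' : (1 : ℝ) < √q := Real.lt_sqrt_of_sq_lt (by norm_num; exact_mod_cast hq)
  have hg : Summable g := summable_succ_pow_mul_geometric (by positivity)
    (inv_lt_one_of_one_lt₀ hq') _
  set C := ∑' ℓ, g ℓ
  have hbound : ∀ n ≥ 1, expDensity V q n ≤ 2 * C / n := by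
    intro n hn
    have hsum : ∑ p ∈ factorPositions n, instProb V q (p.2 - p.1) ≤ (n + 1) * C :=
      (sum_le_sum fun p _ => hD.instProb_le (by omega) (p.2 - p.1)).trans
        (sum_factorPositions_le_mul_tsum (fun ℓ => by positivity) hg n)
    have hchoose : (0 : ℝ) < (n + 1).choose 2 := by
      exact_mod_cast Nat.choose_pos (by omega)
    calc expDensity V q n
        = (∑ p ∈ factorPositions n, instProb V q (p.2 - p.1)) / (n + 1).choose 2 :=
          expDensity_eq_sum_instProb V (by omega) n
      _ ≤ (n + 1) * C / (n + 1).choose 2 := by gcongr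
      _ = 2 * C / n := by
          rw [Nat.cast_choose_two, Nat.cast_add_one, add_sub_cancel_right]
          field_simp
  refine squeeze_zero' (Eventually.of_forall fun n => ?_) (eventually_atTop.2 ⟨1, hbound⟩)
    (tendsto_const_div_atTop_nhds_zero_nat (2 * C))
  rw [expDensity_eq_sum_instProb V (by omega)]
  exact div_nonneg (sum_nonneg fun _ _ => instProb_nonneg ..) (by positivity)

end Doubled

theorem isInstance_replicate_append {P S : List Γ} {x : Γ} (hP : x ∉ P) (hS : x ∉ S) (d : β)
    {B : List β} (hB : B ≠ []) :
    IsInstance (P ++ x :: S) (List.replicate P.length d ++ B ++ List.replicate S.length d) := by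
  classical
  let φ : Γ → List β := fun y => if y = x then B else [d]
  have hconst : ∀ L : List Γ, x ∉ L → (L.map φ).flatten = List.replicate L.length d := by
    intro L hL
    rw [List.map_congr_left (g := fun _ => [d]) fun y hy => if_neg (by rintro rfl; exact hL hy),
      List.map_const', List.flatten_replicate_singleton]
  refine ⟨φ, fun y _ => by by_cases hy : y = x <;> simp [φ, hy, hB], ?_⟩
  simp [hconst P hP, hconst S hS, φ]

theorem pow_le_card_isInstance [Fintype α] {P S : List Γ} {x : Γ} (hP : x ∉ P) (hS : x ∉ S)
    (d : α) {c : ℕ} (hc : 0 < c) :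
    Fintype.card α ^ c ≤ Nat.card
      {U : Fin (P.length + c + S.length) → α // IsInstance (P ++ x :: S) (List.ofFn U)} := by
  let pad (A : Fin c → α) : Fin (P.length + c + S.length) → α :=
    Fin.append (Fin.append (fun _ => d) A) fun _ => d
  have hpad : ∀ A, List.ofFn (pad A)
      = List.replicate P.length d ++ List.ofFn A ++ List.replicate S.length d := by
    simp [pad, List.ofFn_const]
  have hinst : ∀ A, IsInstance (P ++ x :: S) (List.ofFn (pad A)) := fun A => by
    rw [hpad]
    exact isInstance_replicate_append hP hS d (by simpa using hc.ne')
  have hinj : Function.Injective fun A => (⟨pad A, hinst A⟩ :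
      {U : Fin (P.length + c + S.length) → α // IsInstance (P ++ x :: S) (List.ofFn U)}) := by
    intro A A' h
    have hlist := congrArg (fun U => List.ofFn U.1) h
    simp only [hpad, List.append_cancel_left_eq, List.append_cancel_right_eq] at hlist
    exact List.ofFn_injective hlist
  simpa using Nat.card_le_card_of_injective _ hinj

theorem instProb_ge_of_count_eq_one [DecidableEq Γ] {V : List Γ} {x : Γ} (hx : V.count x = 1)
    {q : ℕ} (hq : 0 < q) {ℓ : ℕ} (hℓ : V.length ≤ ℓ) :
    (q : ℝ)⁻¹ ^ (V.length - 1) ≤ instProb V q ℓ := by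
  obtain ⟨P, S, rfl⟩ := List.mem_iff_append.1 (List.count_pos_iff.1 (by omega : 0 < V.count x))
  have hP : x ∉ P := fun h => by
    have := List.count_pos_iff.2 h; simp [List.count_append] at hx; omega
  have hS : x ∉ S := fun h => by
    have := List.count_pos_iff.2 h; simp [List.count_append] at hx; omega
  simp only [List.length_append, List.length_cons] at hℓ ⊢
  obtain ⟨c, hc, rfl⟩ : ∃ c, 0 < c ∧ ℓ = P.length + c + S.length :=
    ⟨ℓ - P.length - S.length, by omega, by omega⟩
  have hcard := pow_le_card_isInstance hP hS (⟨0, hq⟩ : Fin q) hc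
  rw [Fintype.card_fin] at hcard
  rw [instProb, le_div_iff₀ (by positivity), show P.length + (S.length + 1) - 1
    = P.length + S.length by omega, inv_pow, pow_add, pow_add, pow_add]
  calc ((q : ℝ) ^ P.length * q ^ S.length)⁻¹ * (q ^ P.length * q ^ c * q ^ S.length)
      = q ^ c := by field_simp
    _ ≤ _ := by exact_mod_cast hcard

theorem not_tendsto_expDensity_of_count_eq_one [DecidableEq Γ] {V : List Γ} {x : Γ}
    (hx : V.count x = 1) {q : ℕ} (hq : 0 < q) : ¬ Tendsto (expDensity V q) atTop (𝓝 0) := by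
  set m := V.length
  set c : ℝ := (q : ℝ)⁻¹ ^ (m - 1)
  have hbound : ∀ n ≥ 2 * m + 1, c / 4 ≤ expDensity V q n := by
    intro n hn
    have hlong : c * #{p ∈ factorPositions n | m ≤ p.2 - p.1}
        ≤ ∑ p ∈ factorPositions n, instProb V q (p.2 - p.1) :=
      calc c * #{p ∈ factorPositions n | m ≤ p.2 - p.1}
          = ∑ p ∈ factorPositions n with m ≤ p.2 - p.1, c := by simp [mul_comm]
        _ ≤ ∑ p ∈ factorPositions n with m ≤ p.2 - p.1, instProb V q (p.2 - p.1) :=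
          sum_le_sum fun p hp => instProb_ge_of_count_eq_one hx hq (mem_filter.1 hp).2
        _ ≤ ∑ p ∈ factorPositions n, instProb V q (p.2 - p.1) :=
          sum_le_sum_of_subset_of_nonneg (filter_subset _ _) fun _ _ _ => instProb_nonneg ..
    have hpairs : ((n + 1).choose 2 : ℝ) ≤ 4 * #{p ∈ factorPositions n | m ≤ p.2 - p.1} :=
      (choose_two_le_four_mul_choose_two_sub hn).trans <| by
        gcongr; exact_mod_cast choose_le_card_filter_factorPositions (by omega)
    have hchoose : (0 : ℝ) < (n + 1).choose 2 := by
      exact_mod_cast Nat.choose_pos (by omega)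
    rw [expDensity_eq_sum_instProb V hq, le_div_iff₀ hchoose]
    nlinarith [show 0 ≤ c by positivity]
  intro h
  have hc : 0 < c / 4 := by positivity
  linarith [ge_of_tendsto h (eventually_atTop.2 ⟨_, hbound⟩)]

end Words

theorem stmt10_general {Γ : Type*} [DecidableEq Γ] (V : List Γ) (q : ℕ) (hq : 2 ≤ q) :
    Doubled V ↔ Tendsto (fun n => expDensity V q n) atTop (nhds 0) := by
  refine ⟨fun hD => hD.tendsto_expDensity hq, fun h => ?_⟩
  by_contra hnot
  obtain ⟨x, hx, hcount⟩ : ∃ x ∈ V, V.count x < 2 := by simpa [Doubled] using hnot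
  have hx1 : V.count x = 1 := by have := List.count_pos_iff.2 hx; omega
  exact not_tendsto_expDensity_of_count_eq_one hx1 (by omega) h

theorem stmt10 {Γ : Type*} [DecidableEq Γ] (V : List Γ) (hV : V ≠ []) (q : ℕ) (hq : 2 ≤ q) :
    Doubled V ↔ Tendsto (fun n => expDensity V q n) atTop (nhds 0) :=
  stmt10_general V q hq
end
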